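/- arXiv:2604.27877 — 2 statements merged into one kernel-verified Lean document; each statement's English description precedes it below -/
import Mathlib

section
/- Let X : [0,T] → ℝ be C¹ with |X'| ≥ c > 0, let θ_E > 0, θ̃ > 0, C₀ ≥ 0, and let ℰ : [0,T] → ℝ be continuous with ℰ(r) ≤ −θ_E + C₀ e^{−θ̃|X(r)|} for all r. Then for all 0 ≤ s ≤ t ≤ T one has ∫_s^t ℰ(r) dr ≤ −θ_E (t − s) + 2C₀/(cθ̃). -/
/-!
Along a characteristic the speed `|X'|` is at least `c`, so by continuity `X'` keeps one sign
and `X` is a change of variables with Jacobian at least `c`. Hence the time spent near the shock,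
weighted by `exp (-θ |X r|)`, is at most `1 / c` times the total mass `2 / θ` of `exp (-θ |u|)`
on the line.
-/

open Set MeasureTheory Real

theorem IsPreconnected.forall_le_or_forall_le_neg {α : Type*} [TopologicalSpace α] {s : Set α}
    {f : α → ℝ} {c : ℝ} (hs : IsPreconnected s) (hf : ContinuousOn f s) (hc : 0 < c)
    (hfc : ∀ x ∈ s, c ≤ |f x|) : (∀ x ∈ s, c ≤ f x) ∨ ∀ x ∈ s, f x ≤ -c := by
  by_contra! h
  obtain ⟨⟨a, ha, hfa⟩, ⟨b, hb, hfb⟩⟩ := h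
  have hfa_neg : f a ≤ -c := by cases abs_cases (f a) <;> linarith [hfc a ha]
  have hfb_pos : c ≤ f b := by cases abs_cases (f b) <;> linarith [hfc b hb]
  obtain ⟨x, hx, hfx⟩ := hs.intermediate_value ha hb hf
    (show (0 : ℝ) ∈ Icc (f a) (f b) from ⟨by linarith, by linarith⟩)
  have := hfc x hx
  rw [hfx, abs_zero] at this
  linarith

theorem integrable_exp_neg_mul_abs {θ : ℝ} (hθ : 0 < θ) :
    Integrable fun x : ℝ => exp (-θ * |x|) := by
  rw [← integrableOn_univ, ← Iic_union_Ioi (a := 0), integrableOn_union]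
  constructor
  · refine (integrableOn_exp_mul_Iic hθ 0).congr_fun (fun x hx => ?_) measurableSet_Iic
    simp only [abs_of_nonpos (mem_Iic.mp hx), mul_neg, neg_mul, neg_neg]
  · refine (exp_neg_integrableOn_Ioi 0 hθ).congr_fun (fun x hx => ?_) measurableSet_Ioi
    rw [abs_of_pos hx]

theorem integral_exp_neg_mul_abs {θ : ℝ} (hθ : 0 < θ) :
    ∫ x : ℝ, exp (-θ * |x|) = 2 / θ := by
  rw [integral_comp_abs (f := fun x => exp (-θ * x)), integral_exp_mul_Ioi (by linarith) 0]
  field_simp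
  simp

theorem intervalIntegral_exp_neg_mul_abs_le {θ : ℝ} (hθ : 0 < θ) (a b : ℝ) :
    ∫ x in a..b, exp (-θ * |x|) ≤ 2 / θ := by
  rcases le_total a b with hab | hba
  · rw [intervalIntegral.integral_of_le hab, ← integral_exp_neg_mul_abs hθ]
    exact setIntegral_le_integral (integrable_exp_neg_mul_abs hθ)
      (Filter.Eventually.of_forall fun _ => (exp_pos _).le)
  · rw [intervalIntegral.integral_symm]
    have := intervalIntegral.integral_nonneg_of_forall (μ := volume) hba
      fun x => (exp_pos (-θ * |x|)).le
    linarith [div_pos two_pos hθ]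

theorem mul_integral_comp_le_integral_of_le_deriv {a b c : ℝ} {X X' g : ℝ → ℝ}
    (hab : a ≤ b) (hX : ∀ r ∈ Icc a b, HasDerivAt X (X' r) r)
    (hX' : ContinuousOn X' (Icc a b)) (hcX' : ∀ r ∈ Icc a b, c ≤ X' r) (hg : Continuous g)
    (hg0 : ∀ u, 0 ≤ g u) :
    c * ∫ r in a..b, g (X r) ≤ ∫ u in X a..X b, g u := by
  rw [← uIcc_of_le hab] at hX hX'
  have hgX : ContinuousOn (fun r => g (X r)) (uIcc a b) :=
    hg.comp_continuousOn (HasDerivAt.continuousOn hX)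
  rw [← intervalIntegral.integral_const_mul,
    ← intervalIntegral.integral_comp_mul_deriv hX hX' hg]
  refine intervalIntegral.integral_mono_on hab (hgX.const_smul c).intervalIntegrable
    (hgX.mul hX').intervalIntegrable fun r hr => ?_
  rw [mul_comm]
  exact mul_le_mul_of_nonneg_left (hcX' r hr) (hg0 _)

theorem integral_exp_neg_mul_abs_comp_le {a b c θ : ℝ} {X X' : ℝ → ℝ} (hab : a ≤ b)
    (hc : 0 < c) (hθ : 0 < θ) (hX : ∀ r ∈ Icc a b, HasDerivAt X (X' r) r)
    (hX' : ContinuousOn X' (Icc a b)) (hcX' : ∀ r ∈ Icc a b, c ≤ |X' r|) :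
    ∫ r in a..b, exp (-θ * |X r|) ≤ 2 / (c * θ) := by
  have increasing_case : ∀ Y Y' : ℝ → ℝ, (∀ r ∈ Icc a b, HasDerivAt Y (Y' r) r) →
      ContinuousOn Y' (Icc a b) → (∀ r ∈ Icc a b, c ≤ Y' r) →
      c * ∫ r in a..b, exp (-θ * |Y r|) ≤ 2 / θ := fun Y Y' hY hY' hcY' =>
    (mul_integral_comp_le_integral_of_le_deriv hab hY hY' hcY' (by fun_prop)
      fun u => (exp_pos (-θ * |u|)).le).trans (intervalIntegral_exp_neg_mul_abs_le hθ _ _)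
  rw [mul_comm c θ, ← div_div, le_div_iff₀ hc, mul_comm]
  rcases isPreconnected_Icc.forall_le_or_forall_le_neg hX' hc hcX' with hpos | hneg
  · exact increasing_case X X' hX hX' hpos
  · simpa only [abs_neg] using increasing_case (fun r => -X r) (fun r => -X' r)
      (fun r hr => (hX r hr).neg) hX'.neg fun r hr => le_neg.mpr (hneg r hr)

theorem accumulated_damping_estimate_general
    (T c θE θt C₀ : ℝ) (hc : 0 < c) (hθt : 0 < θt)
    (hC₀ : 0 ≤ C₀)
    (X X' E : ℝ → ℝ)
    (hderiv : ∀ r ∈ Set.Icc 0 T, HasDerivAt X (X' r) r)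
    (hXcont : ContinuousOn X' (Set.Icc 0 T))
    (hbound : ∀ r ∈ Set.Icc 0 T, c ≤ |X' r|)
    (hEcont : ContinuousOn E (Set.Icc 0 T))
    (hE : ∀ r ∈ Set.Icc 0 T, E r ≤ -θE + C₀ * Real.exp (-θt * |X r|)) :
    ∀ s t, 0 ≤ s → s ≤ t → t ≤ T →
      ∫ r in s..t, E r ≤ -θE * (t - s) + 2 * C₀ / (c * θt) := by
  intro s t hs hst ht
  have hsub : Icc s t ⊆ Icc 0 T := Icc_subset_Icc hs ht
  have hweight := integral_exp_neg_mul_abs_comp_le hst hc hθt (fun r hr => hderiv r (hsub hr))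
    (hXcont.mono hsub) fun r hr => hbound r (hsub hr)
  have hweight_int : IntervalIntegrable (fun r => exp (-θt * |X r|)) volume s t := by
    have hXc : ContinuousOn X (uIcc s t) :=
      (HasDerivAt.continuousOn hderiv).mono (uIcc_of_le hst ▸ hsub)
    exact ContinuousOn.intervalIntegrable (by fun_prop)
  calc ∫ r in s..t, E r ≤ ∫ r in s..t, (-θE + C₀ * exp (-θt * |X r|)) :=
        intervalIntegral.integral_mono_on hst ((hEcont.mono hsub).intervalIntegrable_of_Icc hst)
          (intervalIntegrable_const.add (hweight_int.const_mul C₀)) fun r hr => hE r (hsub hr)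
    _ = -θE * (t - s) + C₀ * ∫ r in s..t, exp (-θt * |X r|) := by
        rw [intervalIntegral.integral_add intervalIntegrable_const (hweight_int.const_mul C₀),
          intervalIntegral.integral_const, intervalIntegral.integral_const_mul, smul_eq_mul,
          mul_comm]
    _ ≤ -θE * (t - s) + C₀ * (2 / (c * θt)) := by gcongr
    _ = -θE * (t - s) + 2 * C₀ / (c * θt) := by ring

theorem accumulated_damping_estimate
    (T c θE θt C₀ : ℝ) (hT : 0 ≤ T) (hc : 0 < c) (hθE : 0 < θE) (hθt : 0 < θt)
    (hC₀ : 0 ≤ C₀)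
    (X X' E : ℝ → ℝ)
    (hderiv : ∀ r ∈ Set.Icc 0 T, HasDerivAt X (X' r) r)
    (hXcont : ContinuousOn X' (Set.Icc 0 T))
    (hbound : ∀ r ∈ Set.Icc 0 T, c ≤ |X' r|)
    (hEcont : ContinuousOn E (Set.Icc 0 T))
    (hE : ∀ r ∈ Set.Icc 0 T, E r ≤ -θE + C₀ * Real.exp (-θt * |X r|)) :
    ∀ s t, 0 ≤ s → s ≤ t → t ≤ T →
      ∫ r in s..t, E r ≤ -θE * (t - s) + 2 * C₀ / (c * θt) :=
  accumulated_damping_estimate_general T c θE θt C₀ hc hθt hC₀ X X' E hderiv hXcont hbound hEcont hE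
end

section
/- Let U, P, G : [0,T] → [0,∞) be continuous, and suppose there are constants C ≥ 1, θ > 0 such that (i) P(t) ≤ C e^{−θt} V₀ + C ∫_0^t e^{−θ(t−s)} G(s) ds and (ii) U(t) ≤ C e^{−θt} V₀ + C ∫_0^t e^{−θ(t−s)} (P(s) + G(s)) ds for all t ∈ [0,T], where V₀ ≥ 0. Then there exists a constant C' depending only on C and θ such that U(t) ≤ C' e^{−(θ/2)t} V₀ + C' ∫_0^t e^{−(θ/2)(t−s)} G(s) ds for all t ∈ [0,T]. -/
/-! Put c = θ/2 and H(t) = ∫₀ᵗ e^{cs} G(s) ds. Lowering the rate from θ to c only enlarges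
the Duhamel term in (i), and H is nondecreasing, so P(s) ≤ C (V₀ + H(t)) e^{-cs} for s ≤ t.
Feeding this into (ii), the convolution of e^{-θ(t-s)} with e^{-cs} is at most e^{-ct}/(θ - c),
whence U(t) ≤ (C + C²/c) e^{-ct} (V₀ + H(t)), which is the claim with C' = C + 2C²/θ. -/

open Real Set intervalIntegral
open MeasureTheory (volume)

section ExpKernel

variable {f : ℝ → ℝ} {a b t : ℝ}

theorem integral_exp_neg_mul_sub_mul (a t : ℝ) (f : ℝ → ℝ) :
    ∫ s in (0:ℝ)..t, exp (-a * (t - s)) * f s =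
      exp (-a * t) * ∫ s in (0:ℝ)..t, exp (a * s) * f s := by
  rw [← integral_const_mul]
  refine integral_congr fun s _ => ?_
  rw [← mul_assoc, ← exp_add]
  ring_nf

theorem integral_exp_neg_mul_sub_mul_le_of_le (hab : a ≤ b) (ht : 0 ≤ t)
    (hf : IntervalIntegrable f volume 0 t) (hf₀ : ∀ s ∈ Icc 0 t, 0 ≤ f s) :
    ∫ s in (0:ℝ)..t, exp (-b * (t - s)) * f s ≤
      ∫ s in (0:ℝ)..t, exp (-a * (t - s)) * f s := by
  refine integral_mono_on ht (hf.continuousOn_mul (by fun_prop))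
    (hf.continuousOn_mul (by fun_prop)) fun s hs => ?_
  have hexp : exp (-b * (t - s)) ≤ exp (-a * (t - s)) := exp_le_exp.mpr (by nlinarith [hs.2])
  exact mul_le_mul_of_nonneg_right hexp (hf₀ s hs)

theorem integral_exp_neg_mul_sub_le (ha : 0 < a) (t : ℝ) :
    ∫ s in (0:ℝ)..t, exp (-a * (t - s)) ≤ 1 / a := by
  have hsubst : ∫ s in (0:ℝ)..t, exp (-a * (t - s)) = a⁻¹ * (1 - exp (-a * t)) := by
    simpa [integral_exp, mul_sub, mul_comm, ← sub_eq_add_neg] using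
      integral_comp_mul_add (fun x => exp x) ha.ne' (-a * t) (a := 0) (b := t)
  rw [hsubst, one_div]
  exact mul_le_of_le_one_right (inv_nonneg.mpr ha.le) (by linarith [exp_pos (-a * t)])

theorem integral_exp_neg_mul_sub_mul_exp_neg_le (hab : a < b) (t : ℝ) :
    ∫ s in (0:ℝ)..t, exp (-b * (t - s)) * exp (-a * s) ≤ exp (-a * t) / (b - a) := by
  have hsplit : ∀ s,
      exp (-b * (t - s)) * exp (-a * s) = exp (-a * t) * exp (-(b - a) * (t - s)) := by
    intro s
    rw [← exp_add, ← exp_add]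
    ring_nf
  simp only [hsplit, integral_const_mul]
  rw [div_eq_mul_one_div]
  exact mul_le_mul_of_nonneg_left (integral_exp_neg_mul_sub_le (sub_pos.mpr hab) t) (exp_pos _).le

theorem integral_exp_neg_mul_sub_mul_le_of_le_exp {M : ℝ} (hab : a < b) (ht : 0 ≤ t)
    (hf : IntervalIntegrable f volume 0 t) (hM : 0 ≤ M)
    (hfM : ∀ s ∈ Icc 0 t, f s ≤ M * exp (-a * s)) :
    ∫ s in (0:ℝ)..t, exp (-b * (t - s)) * f s ≤ M / (b - a) * exp (-a * t) :=
  calc ∫ s in (0:ℝ)..t, exp (-b * (t - s)) * f s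
      ≤ ∫ s in (0:ℝ)..t, M * (exp (-b * (t - s)) * exp (-a * s)) := by
        refine integral_mono_on ht (hf.continuousOn_mul (by fun_prop))
          (Continuous.intervalIntegrable (by fun_prop) _ _) fun s hs => ?_
        rw [mul_left_comm]
        exact mul_le_mul_of_nonneg_left (hfM s hs) (exp_pos _).le
    _ ≤ M * (exp (-a * t) / (b - a)) := by
        rw [integral_const_mul]
        exact mul_le_mul_of_nonneg_left (integral_exp_neg_mul_sub_mul_exp_neg_le hab t) hM
    _ = M / (b - a) * exp (-a * t) := by ring

theorem exp_neg_mul_mul_add_integral_le {s V : ℝ} (hab : a ≤ b) (hs : s ∈ Icc 0 t)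
    (hf : IntervalIntegrable f volume 0 t) (hf₀ : ∀ r ∈ Icc 0 t, 0 ≤ f r)
    (hV : 0 ≤ V) :
    exp (-b * s) * V + ∫ r in (0:ℝ)..s, exp (-b * (s - r)) * f r ≤
      exp (-a * s) * (V + ∫ r in (0:ℝ)..t, exp (a * r) * f r) := by
  have hfs : IntervalIntegrable f volume 0 s :=
    hf.mono_set (uIcc_subset_uIcc_left (by rwa [uIcc_of_le (hs.1.trans hs.2)]))
  have hrate : ∫ r in (0:ℝ)..s, exp (-b * (s - r)) * f r ≤
      ∫ r in (0:ℝ)..s, exp (-a * (s - r)) * f r :=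
    integral_exp_neg_mul_sub_mul_le_of_le hab hs.1 hfs fun r hr =>
      hf₀ r ⟨hr.1, hr.2.trans hs.2⟩
  have hupto : ∫ r in (0:ℝ)..s, exp (a * r) * f r ≤ ∫ r in (0:ℝ)..t, exp (a * r) * f r :=
    integral_mono_interval le_rfl hs.1 hs.2
      ((MeasureTheory.ae_restrict_iff' measurableSet_Ioc).mpr (Filter.Eventually.of_forall
        fun r hr => mul_nonneg (exp_pos _).le (hf₀ r (Ioc_subset_Icc_self hr))))
      (hf.continuousOn_mul (by fun_prop))
  have hexp : exp (-b * s) ≤ exp (-a * s) := exp_le_exp.mpr (by nlinarith [hs.1])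
  calc exp (-b * s) * V + ∫ r in (0:ℝ)..s, exp (-b * (s - r)) * f r
      ≤ exp (-a * s) * V + exp (-a * s) * ∫ r in (0:ℝ)..s, exp (a * r) * f r := by
        rw [← integral_exp_neg_mul_sub_mul]
        exact add_le_add (mul_le_mul_of_nonneg_right hexp hV) hrate
    _ ≤ exp (-a * s) * (V + ∫ r in (0:ℝ)..t, exp (a * r) * f r) := by
        rw [mul_add]
        exact add_le_add_right (mul_le_mul_of_nonneg_left hupto (exp_pos _).le) _

end ExpKernel

theorem slaving_estimate
    (C θ : ℝ) (hC : 1 ≤ C) (hθ : 0 < θ) :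
    ∃ C' : ℝ, 0 < C' ∧
      ∀ (T V₀ : ℝ), 0 ≤ T → 0 ≤ V₀ →
      ∀ U P G : ℝ → ℝ,
        ContinuousOn U (Set.Icc 0 T) → (∀ t ∈ Set.Icc 0 T, 0 ≤ U t) →
        ContinuousOn P (Set.Icc 0 T) → (∀ t ∈ Set.Icc 0 T, 0 ≤ P t) →
        ContinuousOn G (Set.Icc 0 T) → (∀ t ∈ Set.Icc 0 T, 0 ≤ G t) →
        (∀ t ∈ Set.Icc 0 T,
          P t ≤ C * Real.exp (-θ * t) * V₀ +
            C * ∫ s in (0:ℝ)..t, Real.exp (-θ * (t - s)) * G s) →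
        (∀ t ∈ Set.Icc 0 T,
          U t ≤ C * Real.exp (-θ * t) * V₀ +
            C * ∫ s in (0:ℝ)..t, Real.exp (-θ * (t - s)) * (P s + G s)) →
        ∀ t ∈ Set.Icc 0 T,
          U t ≤ C' * Real.exp (-(θ / 2) * t) * V₀ +
            C' * ∫ s in (0:ℝ)..t, Real.exp (-(θ / 2) * (t - s)) * G s := by
  have hC₀ : 0 < C := by linarith
  refine ⟨C + 2 * C ^ 2 / θ, by positivity, ?_⟩
  intro T V₀ _ hV₀ U P G _ _ hPc _ hGc hG₀ hP hU t ht
  have hsub : Icc 0 t ⊆ Icc 0 T := Icc_subset_Icc le_rfl ht.2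
  have hPi : IntervalIntegrable P volume 0 t :=
    (hPc.mono hsub).intervalIntegrable_of_Icc ht.1
  have hGi : IntervalIntegrable G volume 0 t :=
    (hGc.mono hsub).intervalIntegrable_of_Icc ht.1
  have hG₀t : ∀ s ∈ Icc 0 t, 0 ≤ G s := fun s hs => hG₀ s (hsub hs)
  have hrate : θ / 2 < θ := half_lt_self hθ
  set H := ∫ s in (0:ℝ)..t, exp (θ / 2 * s) * G s
  have hH : 0 ≤ H := integral_nonneg ht.1 fun s hs => mul_nonneg (exp_pos _).le (hG₀t s hs)
  have hPexp : ∀ s ∈ Icc 0 t, P s ≤ C * (V₀ + H) * exp (-(θ / 2) * s) := fun s hs =>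
    calc P s ≤ C * (exp (-θ * s) * V₀ + ∫ r in (0:ℝ)..s, exp (-θ * (s - r)) * G r) :=
          (hP s (hsub hs)).trans_eq (by ring)
      _ ≤ C * (exp (-(θ / 2) * s) * (V₀ + H)) :=
          mul_le_mul_of_nonneg_left
            (exp_neg_mul_mul_add_integral_le hrate.le hs hGi hG₀t hV₀) hC₀.le
      _ = C * (V₀ + H) * exp (-(θ / 2) * s) := by ring
  have hKP := integral_exp_neg_mul_sub_mul_le_of_le_exp hrate ht.1 hPi (by positivity) hPexp
  have hKG := exp_neg_mul_mul_add_integral_le hrate.le (right_mem_Icc.mpr ht.1) hGi hG₀t hV₀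
  calc U t ≤ C * (exp (-θ * t) * V₀ + ∫ s in (0:ℝ)..t, exp (-θ * (t - s)) * G s) +
        C * ∫ s in (0:ℝ)..t, exp (-θ * (t - s)) * P s := by
        have hUt := hU t ht
        simp only [mul_add] at hUt
        rw [integral_add (hPi.continuousOn_mul (by fun_prop)) (hGi.continuousOn_mul (by fun_prop))]
          at hUt
        linarith
    _ ≤ C * (exp (-(θ / 2) * t) * (V₀ + H)) +
        C * (C * (V₀ + H) / (θ - θ / 2) * exp (-(θ / 2) * t)) := by gcongr
    _ = (C + 2 * C ^ 2 / θ) * exp (-(θ / 2) * t) * V₀ +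
        (C + 2 * C ^ 2 / θ) * (exp (-(θ / 2) * t) * H) := by field_simp; ring
    _ = _ := by rw [integral_exp_neg_mul_sub_mul]
end
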